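/- (Energy dissipation of the stabilized generalized-SAV scheme.) For any stabilizing constant κ > 0, any time step τ > 0, any initial grid function u_init, and every n ≥ 0, the matrix I + τ L_κⁿ is invertible and the iterates of the stabilized generalized-SAV scheme satisfy 𝓔_h(u^{n+1}, s^{n+1}) ≤ 𝓔_h(uⁿ, sⁿ). -/

import Mathlib

/-! Subtracting `u⁰` from `(I + τL_κ) u¹ = u⁰ + τN_κ(u⁰, s⁰)` gives
`(1 + τκg)(u¹ - u⁰) - τε² Δ_h u¹ = τ g f(u⁰)`. By summation by parts the gradient energy equals
`-(ε²/2)⟨Δ_h v, v⟩` with `Δ_h` symmetric and nonpositive, so it is convex with gradient `-ε² Δ_h`.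
Testing the scheme with `u¹ - u⁰`, the update of `s` cancels the nonlinear term exactly and
`τ (𝓔_h(u¹, s¹) - 𝓔_h(u⁰, s⁰)) ≤ -(1 + τκg)‖u¹ - u⁰‖² ≤ 0`. The same positivity,
`⟨(I + τL_κ) v, v⟩ ≥ ‖v‖²`, makes `I + τL_κ` invertible. -/

open scoped BigOperators
noncomputable section

/-- Grid functions on the `M × M` periodic mesh, identified with vectors in `ℝ^{M²}`.
The sup norm of this Pi type is the discrete `L^∞` (maximum) norm. -/
abbrev GridFun (M : ℕ) : Type := Fin M × Fin M → ℝ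

/-- Discrete inner product `⟨v,w⟩ = h² Σ_{i,j} v_{ij} w_{ij}`. -/
def gridInner (M : ℕ) (h : ℝ) (v w : GridFun M) : ℝ :=
  h ^ 2 * ∑ p : Fin M × Fin M, v p * w p

/-- Discrete `L²` norm `‖v‖ = ⟨v,v⟩^{1/2}`. -/
def gridNorm (M : ℕ) (h : ℝ) (v : GridFun M) : ℝ :=
  Real.sqrt (gridInner M h v v)

/-- The discrete Laplacian as a linear map (periodic indexing via `Fin M` arithmetic). -/
def dLapL (M : ℕ) [NeZero M] (h : ℝ) : GridFun M →ₗ[ℝ] GridFun M where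
  toFun v := fun p =>
    (v (p.1 + 1, p.2) + v (p.1 - 1, p.2) + v (p.1, p.2 + 1) + v (p.1, p.2 - 1) - 4 * v p) / h ^ 2
  map_add' v w := by funext p; simp only [Pi.add_apply]; ring
  map_smul' c v := by funext p; simp only [Pi.smul_apply, smul_eq_mul, RingHom.id_apply]; ring

/-- The discrete Laplacian `Δ_h` as a continuous linear map on `ℝ^{M²}`. -/
def dLap (M : ℕ) [NeZero M] (h : ℝ) : GridFun M →L[ℝ] GridFun M :=
  LinearMap.toContinuousLinearMap (dLapL M h)

/-- Bulk energy `E_{1h}(v) = h² Σ F(v_{ij})`. -/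
def E1h (M : ℕ) (h : ℝ) (F : ℝ → ℝ) (v : GridFun M) : ℝ :=
  h ^ 2 * ∑ p : Fin M × Fin M, F (v p)

/-- Discrete gradient energy `(ε²/2) ‖∇_h v‖²`. -/
def gradE (M : ℕ) [NeZero M] (h ε : ℝ) (v : GridFun M) : ℝ :=
  ε ^ 2 / 2 * (h ^ 2 * ∑ p : Fin M × Fin M,
    (((v (p.1 + 1, p.2) - v p) / h) ^ 2 + ((v (p.1, p.2 + 1) - v p) / h) ^ 2))

/-- Modified energy `𝓔_h(v, r) = (ε²/2)‖∇_h v‖² + r`. -/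
def modE (M : ℕ) [NeZero M] (h ε : ℝ) (v : GridFun M) (r : ℝ) : ℝ :=
  gradE M h ε v + r

/-- Discrete energy `E_h(v) = (ε²/2)‖∇_h v‖² + E_{1h}(v)`. -/
def Eh (M : ℕ) [NeZero M] (h ε : ℝ) (F : ℝ → ℝ) (v : GridFun M) : ℝ :=
  gradE M h ε v + E1h M h F v

/-- `g(v, r) = σ(r) / σ(E_{1h}(v))`. -/
def gFun (M : ℕ) (h : ℝ) (F σ : ℝ → ℝ) (v : GridFun M) (r : ℝ) : ℝ :=
  σ r / σ (E1h M h F v)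

/-- The linear operator `L_κ = κ g₀ I − ε² Δ_h`. -/
def Lkappa (M : ℕ) [NeZero M] (h ε κ g0 : ℝ) : GridFun M →L[ℝ] GridFun M :=
  (κ * g0) • (1 : GridFun M →L[ℝ] GridFun M) - ε ^ 2 • dLap M h

/-- The nonlinear operator `N_κ(v, r) = g(v,r) f(v) + κ g₀ v` (with `f` applied entrywise). -/
def Nkappa (M : ℕ) (h κ g0 : ℝ) (f F σ : ℝ → ℝ) (v : GridFun M) (r : ℝ) : GridFun M :=
  fun p => gFun M h F σ v r * f (v p) + κ * g0 * v p

/-- One step of the GSAV-EI1 scheme. -/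
def EI1step (M : ℕ) [NeZero M] (h ε κ τ : ℝ) (f F σ : ℝ → ℝ) (us : GridFun M × ℝ) :
    GridFun M × ℝ :=
  let g0 := gFun M h F σ us.1 us.2
  let Lk := Lkappa M h ε κ g0
  let u1 := (NormedSpace.exp (-(τ • Lk))) us.1
    + (∫ θ in (0:ℝ)..τ, NormedSpace.exp (-((τ - θ) • Lk))) (Nkappa M h κ g0 f F σ us.1 us.2)
  (u1, us.2 - g0 * gridInner M h (fun p => f (us.1 p)) (u1 - us.1))

/-- The GSAV-EI1 iterates `(uⁿ, sⁿ)`. -/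
def EI1 (M : ℕ) [NeZero M] (h ε κ τ : ℝ) (f F σ : ℝ → ℝ) (uinit : GridFun M) :
    ℕ → GridFun M × ℝ
  | 0 => (uinit, E1h M h F uinit)
  | n + 1 => EI1step M h ε κ τ f F σ (EI1 M h ε κ τ f F σ uinit n)

/-- The midpoint values `(ũ^{n+1/2}, s̃^{n+1/2})` of the GSAV-EI2 scheme, as a function of
`(uⁿ, sⁿ)`; the prediction `(ũ^{n+1}, s̃^{n+1})` is a GSAV-EI1 step. -/
def EI2half (M : ℕ) [NeZero M] (h ε κ τ : ℝ) (f F σ : ℝ → ℝ) (us : GridFun M × ℝ) :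
    GridFun M × ℝ :=
  let t := EI1step M h ε κ τ f F σ us
  ((1 / 2 : ℝ) • (us.1 + t.1), (us.2 + t.2) / 2)

/-- One step of the GSAV-EI2 scheme. -/
def EI2step (M : ℕ) [NeZero M] (h ε κ τ : ℝ) (f F σ : ℝ → ℝ) (us : GridFun M × ℝ) :
    GridFun M × ℝ :=
  let t := EI1step M h ε κ τ f F σ us
  let m := EI2half M h ε κ τ f F σ us
  let gh := gFun M h F σ m.1 m.2
  let Lk := Lkappa M h ε κ gh
  let u1 := (NormedSpace.exp (-(τ • Lk))) us.1
    + (∫ θ in (0:ℝ)..τ, NormedSpace.exp (-((τ - θ) • Lk))) (Nkappa M h κ gh f F σ m.1 m.2)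
  (u1, us.2 - gh * gridInner M h (fun p => f (m.1 p)) (u1 - us.1)
        + κ / 2 * gh * gridInner M h (u1 - t.1) (u1 - us.1))

/-- The GSAV-EI2 iterates `(uⁿ, sⁿ)`. -/
def EI2 (M : ℕ) [NeZero M] (h ε κ τ : ℝ) (f F σ : ℝ → ℝ) (uinit : GridFun M) :
    ℕ → GridFun M × ℝ
  | 0 => (uinit, E1h M h F uinit)
  | n + 1 => EI2step M h ε κ τ f F σ (EI2 M h ε κ τ f F σ uinit n)

/-- One step of the stabilized generalized-SAV scheme (GSAV-EI1 with `e^{−τL}` replaced by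
`(I + τL)^{−1}`). -/
def SAV1step (M : ℕ) [NeZero M] (h ε κ τ : ℝ) (f F σ : ℝ → ℝ) (us : GridFun M × ℝ) :
    GridFun M × ℝ :=
  let g0 := gFun M h F σ us.1 us.2
  let Lk := Lkappa M h ε κ g0
  let u1 := (Ring.inverse ((1 : GridFun M →L[ℝ] GridFun M) + τ • Lk))
      (us.1 + τ • Nkappa M h κ g0 f F σ us.1 us.2)
  (u1, us.2 - g0 * gridInner M h (fun p => f (us.1 p)) (u1 - us.1))

/-- The stabilized generalized-SAV iterates `(uⁿ, sⁿ)`. -/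
def SAV1 (M : ℕ) [NeZero M] (h ε κ τ : ℝ) (f F σ : ℝ → ℝ) (uinit : GridFun M) :
    ℕ → GridFun M × ℝ
  | 0 => (uinit, E1h M h F uinit)
  | n + 1 => SAV1step M h ε κ τ f F σ (SAV1 M h ε κ τ f F σ uinit n)

theorem dotProduct_self_nonneg {ι R : Type*} [Fintype ι] [Ring R] [LinearOrder R]
    [IsStrictOrderedRing R] (v : ι → R) : 0 ≤ v ⬝ᵥ v :=
  Finset.sum_nonneg fun i _ => mul_self_nonneg (v i)

theorem Equiv.Perm.sum_sub_mul_sub {α R : Type*} [Fintype α] [CommRing R] (e : Equiv.Perm α)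
    (v w : α → R) :
    ∑ x, (v (e x) - v x) * (w (e x) - w x) = ∑ x, (2 * v x - v (e x) - v (e.symm x)) * w x := by
  have hvw : ∑ x, v (e x) * w (e x) = ∑ x, v x * w x := Equiv.sum_comp e (fun x => v x * w x)
  have hwv : ∑ x, v x * w (e x) = ∑ x, v (e.symm x) * w x := by
    simpa using (Equiv.sum_comp e.symm (fun x => v x * w (e x))).symm
  calc ∑ x, (v (e x) - v x) * (w (e x) - w x)
      = ∑ x, v (e x) * w (e x) + ∑ x, v x * w x - ∑ x, v (e x) * w x - ∑ x, v x * w (e x) := by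
        simp only [← Finset.sum_add_distrib, ← Finset.sum_sub_distrib]
        exact Finset.sum_congr rfl fun x _ => by ring
    _ = ∑ x, (2 * v x - v (e x) - v (e.symm x)) * w x := by
        rw [hvw, hwv]
        simp only [← Finset.sum_add_distrib, ← Finset.sum_sub_distrib]
        exact Finset.sum_congr rfl fun x _ => by ring

section DiscreteLaplacian

variable {M : ℕ} [NeZero M]

def shiftFst (M : ℕ) [NeZero M] : Equiv.Perm (Fin M × Fin M) :=
  (Equiv.addRight 1).prodCongr (Equiv.refl _)

def shiftSnd (M : ℕ) [NeZero M] : Equiv.Perm (Fin M × Fin M) :=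
  (Equiv.refl _).prodCongr (Equiv.addRight 1)

theorem shiftFst_apply (p : Fin M × Fin M) : shiftFst M p = (p.1 + 1, p.2) := rfl

theorem shiftSnd_apply (p : Fin M × Fin M) : shiftSnd M p = (p.1, p.2 + 1) := rfl

theorem shiftFst_symm_apply (p : Fin M × Fin M) : (shiftFst M).symm p = (p.1 - 1, p.2) := by
  rw [sub_eq_add_neg]; rfl

theorem shiftSnd_symm_apply (p : Fin M × Fin M) : (shiftSnd M).symm p = (p.1, p.2 - 1) := by
  rw [sub_eq_add_neg]; rfl

def dirichletForm (M : ℕ) [NeZero M] (v w : GridFun M) : ℝ :=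
  ∑ p : Fin M × Fin M,
    ((v (p.1 + 1, p.2) - v p) * (w (p.1 + 1, p.2) - w p)
      + (v (p.1, p.2 + 1) - v p) * (w (p.1, p.2 + 1) - w p))

theorem dirichletForm_comm (v w : GridFun M) : dirichletForm M v w = dirichletForm M w v :=
  Finset.sum_congr rfl fun _ _ => by ring

theorem dirichletForm_self_nonneg (v : GridFun M) : 0 ≤ dirichletForm M v v :=
  Finset.sum_nonneg fun _ _ => add_nonneg (mul_self_nonneg _) (mul_self_nonneg _)

/-- Summation by parts; thanks to `x / 0 = 0` it also holds for `h = 0`. -/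
theorem dLap_dotProduct (h : ℝ) (v w : GridFun M) :
    dLap M h v ⬝ᵥ w = -dirichletForm M v w / h ^ 2 := by
  have hsplit : dirichletForm M v w
      = ∑ p, (v (shiftFst M p) - v p) * (w (shiftFst M p) - w p)
        + ∑ p, (v (shiftSnd M p) - v p) * (w (shiftSnd M p) - w p) :=
    Finset.sum_add_distrib
  rw [hsplit, Equiv.Perm.sum_sub_mul_sub, Equiv.Perm.sum_sub_mul_sub, ← Finset.sum_add_distrib,
    ← Finset.sum_neg_distrib, Finset.sum_div]
  refine Finset.sum_congr rfl fun p _ => ?_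
  rw [shiftFst_apply, shiftSnd_apply, shiftFst_symm_apply, shiftSnd_symm_apply]
  change (_ / h ^ 2) * w p = _
  ring

theorem dLap_dotProduct_comm (h : ℝ) (v w : GridFun M) :
    dLap M h v ⬝ᵥ w = dLap M h w ⬝ᵥ v := by
  rw [dLap_dotProduct, dLap_dotProduct, dirichletForm_comm]

theorem dLap_dotProduct_self_nonpos (h : ℝ) (v : GridFun M) : dLap M h v ⬝ᵥ v ≤ 0 := by
  rw [dLap_dotProduct, neg_div]
  exact neg_nonpos.mpr (div_nonneg (dirichletForm_self_nonneg v) (sq_nonneg h))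

omit [NeZero M] in
theorem gridInner_eq_dotProduct (h : ℝ) (v w : GridFun M) :
    gridInner M h v w = h ^ 2 * (v ⬝ᵥ w) := rfl

theorem gradE_eq_neg_gridInner_dLap (h ε : ℝ) (v : GridFun M) :
    gradE M h ε v = -(ε ^ 2 / 2) * gridInner M h (dLap M h v) v := by
  rw [gridInner_eq_dotProduct, dLap_dotProduct, gradE, dirichletForm, neg_div, Finset.sum_div,
    mul_neg, neg_mul_neg]
  exact congrArg _ (congrArg _ (Finset.sum_congr rfl fun _ _ => by ring))

/-- The gradient energy is convex with gradient `-ε² Δ_h`. -/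
theorem gradE_sub_le (h ε : ℝ) (u w : GridFun M) :
    gradE M h ε u - gradE M h ε w ≤ -ε ^ 2 * gridInner M h (dLap M h u) (u - w) := by
  have hsymm : dLap M h w ⬝ᵥ u = dLap M h u ⬝ᵥ w := dLap_dotProduct_comm h w u
  have hexpand : dLap M h (u - w) ⬝ᵥ (u - w)
      = dLap M h u ⬝ᵥ u - 2 * dLap M h u ⬝ᵥ w + dLap M h w ⬝ᵥ w := by
    rw [map_sub, sub_dotProduct, dotProduct_sub, dotProduct_sub, hsymm]
    ring
  have hδ : 0 ≤ -(dLap M h (u - w) ⬝ᵥ (u - w)) :=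
    neg_nonneg.mpr (dLap_dotProduct_self_nonpos h _)
  rw [hexpand] at hδ
  rw [gradE_eq_neg_gridInner_dLap, gradE_eq_neg_gridInner_dLap, gridInner_eq_dotProduct,
    gridInner_eq_dotProduct, gridInner_eq_dotProduct, dotProduct_sub]
  nlinarith [mul_nonneg (mul_nonneg (sq_nonneg ε) (sq_nonneg h)) hδ]

end DiscreteLaplacian

theorem ContinuousLinearMap.isUnit_of_dotProduct_self_le {ι : Type*} [Fintype ι]
    {A : (ι → ℝ) →L[ℝ] (ι → ℝ)} (hA : ∀ v, v ⬝ᵥ v ≤ A v ⬝ᵥ v) : IsUnit A := by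
  rw [ContinuousLinearMap.isUnit_iff_isUnit_toLinearMap, LinearMap.isUnit_iff_ker_eq_bot,
    LinearMap.ker_eq_bot']
  intro v hv
  have := hA v
  rw [ContinuousLinearMap.coe_coe] at hv
  rw [hv, zero_dotProduct] at this
  exact dotProduct_self_eq_zero.mp (le_antisymm this (dotProduct_self_nonneg v))

theorem gFun_pos {M : ℕ} {h : ℝ} {F σ : ℝ → ℝ} (hσpos : ∀ x, 0 < σ x) (v : GridFun M) (r : ℝ) :
    0 < gFun M h F σ v r :=
  div_pos (hσpos r) (hσpos _)

section Scheme

variable {M : ℕ} [NeZero M] {h ε κ τ : ℝ}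

theorem isUnit_one_add_smul_Lkappa {g : ℝ} (hτ : 0 ≤ τ) (hκg : 0 ≤ κ * g) :
    IsUnit ((1 : GridFun M →L[ℝ] GridFun M) + τ • Lkappa M h ε κ g) := by
  refine ContinuousLinearMap.isUnit_of_dotProduct_self_le fun v => ?_
  have hΔ : 0 ≤ -(dLap M h v ⬝ᵥ v) := neg_nonneg.mpr (dLap_dotProduct_self_nonpos h v)
  have hvv := dotProduct_self_nonneg v
  simp only [Lkappa, add_apply, one_apply_eq_self, smul_apply, sub_apply, add_dotProduct,
    smul_dotProduct, sub_dotProduct, smul_eq_mul]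
  nlinarith [mul_nonneg hτ (mul_nonneg hκg hvv), mul_nonneg hτ (mul_nonneg (sq_nonneg ε) hΔ)]

theorem apply_SAV1step_fst (f F σ : ℝ → ℝ) (u : GridFun M) (s : ℝ)
    (hunit : IsUnit ((1 : GridFun M →L[ℝ] GridFun M) + τ • Lkappa M h ε κ (gFun M h F σ u s))) :
    ((1 : GridFun M →L[ℝ] GridFun M) + τ • Lkappa M h ε κ (gFun M h F σ u s))
        (SAV1step M h ε κ τ f F σ (u, s)).1
      = u + τ • Nkappa M h κ (gFun M h F σ u s) f F σ u s := by
  rw [SAV1step]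
  exact DFunLike.congr_fun (Ring.mul_inverse_cancel _ hunit) _

theorem modE_SAV1step_le (f F σ : ℝ → ℝ) (hσpos : ∀ x, 0 < σ x) (hκ : 0 ≤ κ) (hτ : 0 < τ)
    (u : GridFun M) (s : ℝ) :
    modE M h ε (SAV1step M h ε κ τ f F σ (u, s)).1 (SAV1step M h ε κ τ f F σ (u, s)).2
      ≤ modE M h ε u s := by
  set g := gFun M h F σ u s
  have hg : 0 < g := gFun_pos hσpos u s
  have hscheme := apply_SAV1step_fst f F σ u s
    (isUnit_one_add_smul_Lkappa (ε := ε) hτ.le (mul_nonneg hκ hg.le))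
  have hs : (SAV1step M h ε κ τ f F σ (u, s)).2
      = s - g * gridInner M h (fun p => f (u p)) ((SAV1step M h ε κ τ f F σ (u, s)).1 - u) := rfl
  set u₁ := (SAV1step M h ε κ τ f F σ (u, s)).1
  have hpointwise : (1 + τ * κ * g) • (u₁ - u) - (τ * ε ^ 2) • dLap M h u₁
      = (τ * g) • fun p => f (u p) := by
    funext p
    have hp := congrFun hscheme p
    simp only [Lkappa, Nkappa, add_apply, one_apply_eq_self, smul_apply, sub_apply, Pi.add_apply,
      Pi.smul_apply, Pi.sub_apply, smul_eq_mul] at hp ⊢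
    linear_combination hp
  have htested := congrArg (· ⬝ᵥ (u₁ - u)) hpointwise
  rw [sub_dotProduct, smul_dotProduct, smul_dotProduct, smul_dotProduct, smul_eq_mul, smul_eq_mul,
    smul_eq_mul] at htested
  have hconv := gradE_sub_le h ε u₁ u
  rw [gridInner_eq_dotProduct] at hconv hs
  have hdiss : 0 ≤ h ^ 2 * ((1 + τ * κ * g) * ((u₁ - u) ⬝ᵥ (u₁ - u))) :=
    mul_nonneg (sq_nonneg h) (mul_nonneg (by positivity) (dotProduct_self_nonneg _))
  have hτstep :
      τ * (gradE M h ε u₁ - gradE M h ε u - g * (h ^ 2 * (fun p => f (u p)) ⬝ᵥ (u₁ - u)))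
      ≤ -(h ^ 2 * ((1 + τ * κ * g) * ((u₁ - u) ⬝ᵥ (u₁ - u)))) := by
    nlinarith [mul_le_mul_of_nonneg_left hconv hτ.le, congrArg (h ^ 2 * ·) htested]
  rw [modE, modE, hs]
  nlinarith

end Scheme

theorem stmt_18_general (M : ℕ) [NeZero M] (L h ε : ℝ) (f F σ : ℝ → ℝ) (hσpos : ∀ x, 0 < σ x)
    (κ : ℝ) (hκ : 0 < κ) (τ : ℝ) (hτ : 0 < τ) (uinit : GridFun M) :
    ∀ n : ℕ,
      IsUnit ((1 : GridFun M →L[ℝ] GridFun M)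
          + τ • Lkappa M h ε κ
              (gFun M h F σ (SAV1 M h ε κ τ f F σ uinit n).1 (SAV1 M h ε κ τ f F σ uinit n).2)) ∧
      modE M h ε (SAV1 M h ε κ τ f F σ uinit (n + 1)).1 (SAV1 M h ε κ τ f F σ uinit (n + 1)).2
        ≤ modE M h ε (SAV1 M h ε κ τ f F σ uinit n).1 (SAV1 M h ε κ τ f F σ uinit n).2 := by
  intro n
  exact ⟨isUnit_one_add_smul_Lkappa hτ.le (mul_nonneg hκ.le (gFun_pos hσpos _ _).le),
    modE_SAV1step_le f F σ hσpos hκ.le hτ _ _⟩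

/-- Energy dissipation of the stabilized generalized-SAV scheme: for any `κ > 0`, `τ > 0`,
initial grid function, and `n ≥ 0`, the matrix `I + τ L_κⁿ` is invertible and
`𝓔_h(u^{n+1}, s^{n+1}) ≤ 𝓔_h(uⁿ, sⁿ)`. -/
theorem stmt_18 (M : ℕ) [NeZero M] (L h ε : ℝ) (hL : 0 < L) (hh : h = L / M) (hε : 0 < ε)
    (f F σ : ℝ → ℝ) (hF : ∀ x, HasDerivAt F (-f x) x)
    (hσ : ContDiff ℝ 1 σ) (hσpos : ∀ x, 0 < σ x) (hσmono : ∀ x, 0 ≤ deriv σ x)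
    (κ : ℝ) (hκ : 0 < κ) (hf : ContDiff ℝ 1 f)
    (τ : ℝ) (hτ : 0 < τ) (uinit : GridFun M) :
    ∀ n : ℕ,
      IsUnit ((1 : GridFun M →L[ℝ] GridFun M)
          + τ • Lkappa M h ε κ
              (gFun M h F σ (SAV1 M h ε κ τ f F σ uinit n).1 (SAV1 M h ε κ τ f F σ uinit n).2)) ∧
      modE M h ε (SAV1 M h ε κ τ f F σ uinit (n + 1)).1 (SAV1 M h ε κ τ f F σ uinit (n + 1)).2
        ≤ modE M h ε (SAV1 M h ε κ τ f F σ uinit n).1 (SAV1 M h ε κ τ f F σ uinit n).2 :=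
  stmt_18_general M L h ε f F σ hσpos κ hκ τ hτ uinit
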